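/- For every s ∈ ℝ with π/8 ≤ s₁ − s ≤ π/2, the derivative of Ψ satisfies |Ψ'(s)| ≤ π. -/

import Mathlib

/-- The circular helix `u(s) = (cos as, sin as, √(1−a²)·s)` in `ℝ³` (Euclidean). -/
noncomputable def helix (a : ℝ) (s : ℝ) : EuclideanSpace ℝ (Fin 3) :=
  (WithLp.equiv 2 (Fin 3 → ℝ)).symm
    ![Real.cos (a * s), Real.sin (a * s), Real.sqrt (1 - a ^ 2) * s]

/-!
With `x = t - s₁`, expanding the squared distance gives `Ψ(t) = 2 - 2 cos (a x) + (1 - a²) x²`,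
so `Ψ'(t) = 2 (a sin (a x) + (1 - a²) x)`. As `|sin (a x)| ≤ |a x|` and `a² ≤ 1`, this is at most
`2 (a² + (1 - a²)) |x| = 2 |x| ≤ π`.
-/

open Real

lemma norm_helix_sub_helix_sq {a : ℝ} (ha : a ^ 2 ≤ 1) (t s : ℝ) :
    ‖helix a t - helix a s‖ ^ 2 = 2 - 2 * cos (a * (t - s)) + (1 - a ^ 2) * (t - s) ^ 2 := by
  rw [EuclideanSpace.norm_sq_eq]
  simp only [helix, WithLp.equiv_symm_apply, PiLp.sub_apply, norm_eq_abs, sq_abs,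
    Fin.sum_univ_three, Matrix.cons_val_zero, Matrix.cons_val_one, Matrix.cons_val]
  rw [mul_sub, cos_sub]
  have hsqrt : sqrt (1 - a ^ 2) ^ 2 = 1 - a ^ 2 := sq_sqrt (by linarith)
  linear_combination (t - s) ^ 2 * hsqrt + sin_sq_add_cos_sq (a * t) + sin_sq_add_cos_sq (a * s)

lemma hasDerivAt_norm_helix_sub_helix_sq {a : ℝ} (ha : a ^ 2 ≤ 1) (s t : ℝ) :
    HasDerivAt (fun t => ‖helix a t - helix a s‖ ^ 2)
      (2 * (a * sin (a * (t - s)) + (1 - a ^ 2) * (t - s))) t := by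
  simp only [norm_helix_sub_helix_sq ha]
  have hx : HasDerivAt (fun t : ℝ => t - s) 1 t := (hasDerivAt_id' t).sub_const s
  have H := (((hx.const_mul a).cos.const_mul 2).const_sub 2).add ((hx.pow 2).const_mul (1 - a ^ 2))
  refine H.congr_deriv ?_
  push_cast
  ring

lemma abs_mul_sin_mul_add_le {a : ℝ} (ha : a ^ 2 ≤ 1) (x : ℝ) :
    |a * sin (a * x) + (1 - a ^ 2) * x| ≤ |x| :=
  calc |a * sin (a * x) + (1 - a ^ 2) * x|
      ≤ |a| * |sin (a * x)| + (1 - a ^ 2) * |x| := by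
        grw [abs_add_le, abs_mul, abs_mul, abs_of_nonneg (sub_nonneg.2 ha)]
    _ ≤ |a| * |a * x| + (1 - a ^ 2) * |x| := by
        gcongr ?_ + _
        exact mul_le_mul_of_nonneg_left abs_sin_le_abs (abs_nonneg a)
    _ = |x| := by rw [abs_mul, ← mul_assoc, abs_mul_abs_self]; ring

/-- if `π/8 ≤ s₁ − s ≤ π/2` then `|Ψ'(s)| ≤ π`,
where `Ψ(s) = ‖u(s) − u(s₁)‖²`. -/
theorem statement11 (a : ℝ) (ha0 : 0 < a) (ha1 : a < 1) (s₁ : ℝ) :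
    ∀ s : ℝ, Real.pi / 8 ≤ s₁ - s → s₁ - s ≤ Real.pi / 2 →
      |deriv (fun t => ‖helix a t - helix a s₁‖ ^ 2) s| ≤ Real.pi := by
  intro s hlow hupp
  have ha : a ^ 2 ≤ 1 := by nlinarith
  rw [(hasDerivAt_norm_helix_sub_helix_sq ha s₁ s).deriv, abs_mul, abs_two]
  have hdist : |s - s₁| ≤ π / 2 := by rw [abs_sub_comm, abs_le]; constructor <;> linarith
  linarith [abs_mul_sin_mul_add_le ha (s - s₁)]
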